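/- Let V be a vector space over ℂ with ℤ-indexed bilinear products aₙb satisfying truncation, and let D : V → V be a linear map for which the skew-symmetry holds in component form: aₙb = Σ_{j≥0} (−1)^{n+j+1} (1/j!) Dʲ(b_{n+j}a) for all a,b ∈ V and n ∈ ℤ (a finite sum by truncation). Let P : V → V be linear and λ ∈ ℂ, and define a ⋆ₙ b := aₙ(Pb) + (Pa)ₙb + λ·aₙb. Then the products ⋆ₙ satisfy truncation and the same component skew-symmetry with respect to D. If moreover the original products satisfy the D-derivative property (Da)ₙb = −n·a_{n−1}b and the D-bracket derivative property D(aₙb) − aₙ(Db) = −n·a_{n−1}b for all a,b,n, and P commutes with D (P ∘ D = D ∘ P), then the products ⋆ₙ also satisfy both the D-derivative and the D-bracket derivative property. -/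
import Mathlib


section Defs

variable {W : Type*} [AddCommGroup W] [Module ℂ W]

/-- Truncation: for all `a, b` the products `aₙb` vanish for `n` large. -/
def Truncation (μ : ℤ → W → W → W) : Prop :=
  ∀ a b : W, ∃ N : ℤ, ∀ n ≥ N, μ n a b = 0

/-- Component form of the skew-symmetry `Y(a,z)b = e^{zD}Y(b,−z)a`:
`aₙb = Σ_{j≥0} (−1)^{n+j+1} (1/j!) Dʲ(b_{n+j}a)`. -/
def SkewSym (μ : ℤ → W → W → W) (D : W →ₗ[ℂ] W) : Prop :=
  ∀ (a b : W) (n : ℤ),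
    μ n a b = ∑ᶠ j : ℕ,
      (((-1 : ℂ) ^ (n + (j : ℤ) + 1)) * ((j.factorial : ℂ)⁻¹)) • (D ^ j) (μ (n + (j : ℤ)) b a)

/-- Component form of the `D`-derivative property `Y(Da,z) = (d/dz)Y(a,z)`:
`(Da)ₙb = −n·a_{n−1}b`. -/
def DDeriv (μ : ℤ → W → W → W) (D : W →ₗ[ℂ] W) : Prop :=
  ∀ (a b : W) (n : ℤ), μ n (D a) b = (-n : ℂ) • μ (n - 1) a b

/-- Component form of the `D`-bracket derivative property `[D,Y(a,z)] = (d/dz)Y(a,z)`: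
`D(aₙb) − aₙ(Db) = −n·a_{n−1}b`. -/
def DBracket (μ : ℤ → W → W → W) (D : W →ₗ[ℂ] W) : Prop :=
  ∀ (a b : W) (n : ℤ), D (μ n a b) - μ n a (D b) = (-n : ℂ) • μ (n - 1) a b

end Defs

/-- The derived products `a ⋆ₙ b = aₙ(Pb) + (Pa)ₙb + lam·aₙb`. -/
def starProd {V : Type*} [AddCommGroup V] [Module ℂ V]
    (μ : ℤ → V →ₗ[ℂ] V →ₗ[ℂ] V) (P : V →ₗ[ℂ] V) (lam : ℂ)
    (n : ℤ) (a b : V) : V :=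
  μ n a (P b) + μ n (P a) b + lam • μ n a b

/-- If the products `μ` satisfy truncation and component skew-symmetry with
respect to `D`, so do the derived products `⋆ₙ`; if moreover `μ` satisfies the
`D`-derivative and `D`-bracket derivative properties and `P` commutes with `D`,
then `⋆ₙ` also satisfies both. -/
theorem stmt15 {V : Type*} [AddCommGroup V] [Module ℂ V]
    (μ : ℤ → V →ₗ[ℂ] V →ₗ[ℂ] V) (D : V →ₗ[ℂ] V)
    (htr : Truncation (fun n (a b : V) => μ n a b))
    (hss : SkewSym (fun n (a b : V) => μ n a b) D)
    (P : V →ₗ[ℂ] V) (lam : ℂ) :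
    Truncation (starProd μ P lam) ∧ SkewSym (starProd μ P lam) D ∧
    (DDeriv (fun n (a b : V) => μ n a b) D →
     DBracket (fun n (a b : V) => μ n a b) D →
     (∀ v : V, P (D v) = D (P v)) →
     DDeriv (starProd μ P lam) D ∧ DBracket (starProd μ P lam) D) := by
  -- finiteness of supports
  have hfin : ∀ (x y : V) (n : ℤ) (g : ℕ → ℂ),
      (Function.support fun j : ℕ => g j • (D ^ j) (μ (n + (j : ℤ)) x y)).Finite := by
    intro x y n g
    obtain ⟨N, hN⟩ := htr x y
    apply Set.Finite.subset (Set.finite_Iio (N - n).toNat)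
    intro j hj
    simp only [Function.mem_support] at hj
    by_contra hlt
    simp only [Set.mem_Iio, not_lt] at hlt
    have : n + (j : ℤ) ≥ N := by omega
    exact hj (by have h := hN _ this; simp only at h; rw [h]; simp)
  refine ⟨?_, ?_, ?_⟩
  · intro a b
    obtain ⟨N1, h1⟩ := htr a (P b)
    obtain ⟨N2, h2⟩ := htr (P a) b
    obtain ⟨N3, h3⟩ := htr a b
    refine ⟨max N1 (max N2 N3), fun n hn => ?_⟩
    simp only [starProd, h1 n (le_trans (le_max_left _ _) hn),
      h2 n (le_trans (le_max_left _ _) (le_trans (le_max_right _ _) hn)),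
      h3 n (le_trans (le_max_right _ _) (le_trans (le_max_right _ _) hn))]
    simp
  · intro a b n
    set c : ℕ → ℂ := fun j => ((-1 : ℂ) ^ (n + (j : ℤ) + 1)) * ((j.factorial : ℂ)⁻¹) with hc
    have h1 := hss a (P b) n
    have h2 := hss (P a) b n
    have h3 := hss a b n
    simp only at h1 h2 h3
    calc starProd μ P lam n a b
        = (∑ᶠ j : ℕ, c j • (D ^ j) (μ (n + (j : ℤ)) (P b) a))
          + (∑ᶠ j : ℕ, c j • (D ^ j) (μ (n + (j : ℤ)) b (P a)))
          + lam • ∑ᶠ j : ℕ, c j • (D ^ j) (μ (n + (j : ℤ)) b a) := by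
            rw [starProd, h1, h2, h3]
      _ = ∑ᶠ j : ℕ, c j • (D ^ j) (starProd μ P lam (n + (j : ℤ)) b a) := by
            rw [smul_finsum]
            rw [← finsum_add_distrib (hfin (P b) a n c) (hfin b (P a) n c)]
            rw [← finsum_add_distrib ((hfin (P b) a n c).union (hfin b (P a) n c)
                  |>.subset (Function.support_add _ _))
                (hfin b a n (fun j => lam * c j) |>.subset (by
                  intro j hj
                  simp only [Function.mem_support, smul_smul] at hj ⊢
                  exact hj))]
            apply finsum_congr
            intro j
            simp only [starProd, map_add, map_smul, smul_add, smul_smul]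
            ring_nf
            abel
  · intro hdd hdb hcomm
    constructor
    · intro a b n
      simp only [starProd, hcomm a, hdd, smul_add, smul_smul, mul_comm lam]
      simp [hdd (P a) b n, hdd a (P b) n, hdd a b n, smul_smul, mul_comm lam]
    · intro a b n
      have e1 := hdb a (P b) n
      have e2 := hdb (P a) b n
      have e3 := hdb a b n
      simp only at e1 e2 e3
      simp only [starProd, map_add, map_smul, hcomm b]
      rw [smul_add, smul_add]
      rw [← e1, ← e2]
      have e3' : lam • (D (μ n a b)) - lam • (μ n a (D b))
          = lam • ((-n : ℂ) • μ (n-1) a b) := by rw [← smul_sub, e3]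
      rw [smul_comm] at e3'
      rw [← e3']
      abel
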